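/- Let 𝔄 be a fully interpreted τ-structure, X ⊆ A, and φ ∈ MSO(τ). If 𝒢 ≅ reduce(EMC(𝔄, X, φ)), then eval(MC(𝔄, φ)) = eval(convert(𝒢)). -/

import Mathlib

namespace MSOG

attribute [local instance] Classical.propDecidable

/-! ### Players and vocabularies -/

inductive Player where
  | falsifier
  | verifier
deriving DecidableEq

/-- A vocabulary: a finite set of relation symbol names and nullary symbol names.
Symbols are drawn from `ℕ`; the arity of relation symbols is given by a global
arity function `ar : ℕ → ℕ`. -/
structure Vocab where
  rels : Finset ℕ
  nulls : Finset ℕ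

def Vocab.addRel (τ : Vocab) (R : ℕ) : Vocab := ⟨insert R τ.rels, τ.nulls⟩

def Vocab.addNul (τ : Vocab) (c : ℕ) : Vocab := ⟨τ.rels, insert c τ.nulls⟩

/-! ### Structures -/

/-- A (partially interpreted) structure: a finite universe of objects (⊆ ℕ),
an interpretation of each relation symbol as a set of tuples (lists), and a
partial interpretation of nullary symbols (`none` = nil/uninterpreted). -/
structure Struc where
  voc : Vocab
  univ : Finset ℕ
  rel : ℕ → List ℕ → Prop
  nul : ℕ → Option ℕ

/-- Wellformedness of a structure w.r.t. the arity function: relations only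
interpret relation symbols of the vocabulary by tuples of the right length over
the universe, and nullary symbols of the vocabulary by universe elements. -/
structure Struc.WF (ar : ℕ → ℕ) (A : Struc) : Prop where
  rel_wf : ∀ R t, A.rel R t → R ∈ A.voc.rels ∧ t.length = ar R ∧ ∀ x ∈ t, x ∈ A.univ
  nul_wf : ∀ c x, A.nul c = some x → c ∈ A.voc.nulls ∧ x ∈ A.univ

def Struc.FullyInterpreted (A : Struc) : Prop := ∀ c ∈ A.voc.nulls, (A.nul c).isSome

/-- The set `c̄^𝔄` of values of the interpreted nullary symbols. -/
def Struc.nulValues (A : Struc) : Finset ℕ :=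
  A.voc.nulls.biUnion fun c => (A.nul c).toFinset

/-- Induced substructure `𝔄[s]`. -/
def Struc.restrict (A : Struc) (s : Finset ℕ) : Struc where
  voc := A.voc
  univ := A.univ ∩ s
  rel := fun R t => A.rel R t ∧ ∀ x ∈ t, x ∈ s
  nul := fun c =>
    match A.nul c with
    | some x => if x ∈ s then some x else none
    | none => none

/-- Expansion `(𝔄, u)` interpreting the nullary symbol `c` as `u` (possibly nil). -/
def Struc.addNul (A : Struc) (c : ℕ) (u : Option ℕ) : Struc where
  voc := A.voc.addNul c
  univ := A.univ
  rel := A.rel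
  nul := fun d => if d = c then u else A.nul d

/-- Expansion `(𝔄, U)` interpreting the unary relation symbol `R` as `U ⊆ A`. -/
def Struc.addRel (A : Struc) (R : ℕ) (U : Finset ℕ) : Struc where
  voc := A.voc.addRel R
  univ := A.univ
  rel := fun S t => if S = R then ∃ x ∈ U, t = [x] else A.rel S t
  nul := A.nul

/-- Expansion `(𝔄, U₁, …, U_l)` interpreting each unary relation symbol `R ∈ Rs`
as `U R ⊆ A`. -/
def Struc.addRels (A : Struc) (Rs : Finset ℕ) (U : ℕ → Finset ℕ) : Struc where
  voc := ⟨A.voc.rels ∪ Rs, A.voc.nulls⟩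
  univ := A.univ
  rel := fun S t => if S ∈ Rs then ∃ x ∈ U S, t = [x] else A.rel S t
  nul := A.nul

/-- `h` is an isomorphism from `A` to `B`. -/
structure Iso (A B : Struc) (h : ℕ → ℕ) : Prop where
  voc_eq : A.voc = B.voc
  bij : Set.BijOn h ↑A.univ ↑B.univ
  interp_iff : ∀ c ∈ A.voc.nulls, ((A.nul c).isSome ↔ (B.nul c).isSome)
  nul_map : ∀ c ∈ A.voc.nulls, ∀ x, A.nul c = some x → B.nul c = some (h x)
  rel_map : ∀ R ∈ A.voc.rels, ∀ t : List ℕ, (∀ x ∈ t, x ∈ A.univ) →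
    (A.rel R t ↔ B.rel R (t.map h))

/-- Two structures are compatible: interpreted nullary symbols agree, and the
identity is an isomorphism between the substructures induced by the common part
of the universes. -/
def Compatible (A B : Struc) : Prop :=
  A.voc = B.voc ∧
  (∀ c x y, A.nul c = some x → B.nul c = some y → x = y) ∧
  Iso (A.restrict (A.univ ∩ B.univ)) (B.restrict (A.univ ∩ B.univ)) id

/-- Union of two (compatible) structures. -/
def Struc.union (A B : Struc) : Struc where
  voc := A.voc
  univ := A.univ ∪ B.univ
  rel := fun R t => A.rel R t ∨ B.rel R t
  nul := fun c =>
    match A.nul c with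
    | some x => some x
    | none => B.nul c

/-! ### MSO formulas -/

/-- MSO formulas in negation normal form. -/
inductive MSO where
  | atom (R : ℕ) (cs : List ℕ)
  | natom (R : ℕ) (cs : List ℕ)
  | conj (φ ψ : MSO)
  | disj (φ ψ : MSO)
  | fall (c : ℕ) (φ : MSO)
  | fex (c : ℕ) (φ : MSO)
  | sall (R : ℕ) (φ : MSO)
  | sex (R : ℕ) (φ : MSO)
deriving DecidableEq

/-- `MSO.wf ar τ φ` means `φ ∈ MSO(τ)` (w.r.t. the arity function `ar`,
quantified symbols being fresh unary relation resp. nullary symbols). -/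
def MSO.wf (ar : ℕ → ℕ) : Vocab → MSO → Prop
  | τ, .atom R cs => R ∈ τ.rels ∧ cs.length = ar R ∧ ∀ c ∈ cs, c ∈ τ.nulls
  | τ, .natom R cs => R ∈ τ.rels ∧ cs.length = ar R ∧ ∀ c ∈ cs, c ∈ τ.nulls
  | τ, .conj φ ψ => MSO.wf ar τ φ ∧ MSO.wf ar τ ψ
  | τ, .disj φ ψ => MSO.wf ar τ φ ∧ MSO.wf ar τ ψ
  | τ, .fall c φ => c ∉ τ.nulls ∧ MSO.wf ar (τ.addNul c) φ
  | τ, .fex c φ => c ∉ τ.nulls ∧ MSO.wf ar (τ.addNul c) φ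
  | τ, .sall R φ => R ∉ τ.rels ∧ ar R = 1 ∧ MSO.wf ar (τ.addRel R) φ
  | τ, .sex R φ => R ∉ τ.rels ∧ ar R = 1 ∧ MSO.wf ar (τ.addRel R) φ

/-- Quantifier rank. -/
def MSO.qr : MSO → ℕ
  | .atom _ _ => 0
  | .natom _ _ => 0
  | .conj φ ψ => max φ.qr ψ.qr
  | .disj φ ψ => max φ.qr ψ.qr
  | .fall _ φ => φ.qr + 1
  | .fex _ φ => φ.qr + 1
  | .sall _ φ => φ.qr + 1
  | .sex _ φ => φ.qr + 1

/-- Length `‖φ‖` of (an encoding of) the formula. -/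
def MSO.len : MSO → ℕ
  | .atom _ cs => 1 + cs.length
  | .natom _ cs => 1 + cs.length
  | .conj φ ψ => 1 + φ.len + ψ.len
  | .disj φ ψ => 1 + φ.len + ψ.len
  | .fall _ φ => 1 + φ.len
  | .fex _ φ => 1 + φ.len
  | .sall _ φ => 1 + φ.len
  | .sex _ φ => 1 + φ.len

def MSO.IsAtomic : MSO → Prop
  | .atom _ _ | .natom _ _ => True
  | _ => False

def MSO.IsUniversal : MSO → Prop
  | .conj _ _ | .fall _ _ | .sall _ _ => True
  | _ => False

def MSO.IsExistential : MSO → Prop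
  | .disj _ _ | .fex _ _ | .sex _ _ => True
  | _ => False

/-- Classical (Tarskian) satisfaction `𝔄 ⊨ φ`. -/
def Sat : Struc → MSO → Prop
  | A, .atom R cs => ∃ t, cs.mapM A.nul = some t ∧ A.rel R t
  | A, .natom R cs => ∃ t, cs.mapM A.nul = some t ∧ ¬ A.rel R t
  | A, .conj φ ψ => Sat A φ ∧ Sat A ψ
  | A, .disj φ ψ => Sat A φ ∨ Sat A ψ
  | A, .fall c φ => ∀ a ∈ A.univ, Sat (A.addNul c (some a)) φ
  | A, .fex c φ => ∃ a ∈ A.univ, Sat (A.addNul c (some a)) φ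
  | A, .sall R φ => ∀ U ⊆ A.univ, Sat (A.addRel R U) φ
  | A, .sex R φ => ∃ U ⊆ A.univ, Sat (A.addRel R U) φ

/-! ### Games -/

/-- A game, presented as its unfolding: either one of the two fixed games
`⊤` (the verifier has a winning strategy) or `⊥` (the falsifier has a winning
strategy), or an initial position together with the player (if any) this
position is assigned to and the list of subgames reachable by the moves. -/
inductive Game (P : Type) where
  | top
  | bot
  | node (pos : P) (owner : Option Player) (subs : List (Game P))

theorem Game.sizeOf_lt_node {P : Type} [SizeOf P] {p : P} {o : Option Player}
    {s : List (Game P)} {g : Game P} (h : g ∈ s) :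
    sizeOf g < sizeOf (Game.node p o s) := by
  have := List.sizeOf_lt_of_mem h
  simp only [Game.node.sizeOf_spec]
  omega

/-- The evaluation algorithm: returns `⊤` if the verifier has a winning
strategy, `⊥` if the falsifier has one, and otherwise the unfolded game
recording the drawn plays. -/
noncomputable def Game.eval {P : Type} : Game P → Game P
  | .top => .top
  | .bot => .bot
  | .node p o subs =>
    let es := subs.attach.map fun g => Game.eval g.1
    match o with
    | some .falsifier =>
      if ∀ g ∈ es, g = Game.top then Game.top
      else if Game.bot ∈ es then Game.bot
      else Game.node p o es
    | some .verifier =>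
      if ∀ g ∈ es, g = Game.bot then Game.bot
      else if Game.top ∈ es then Game.top
      else Game.node p o es
    | none => Game.node p o es
termination_by g => sizeOf g
decreasing_by
  exact Game.sizeOf_lt_node g.2

/-- Equivalence of games, relative to an equivalence `pe` on positions:
the initial positions are equivalent (with equal assignment to players) and
there is a bijection `e` between the sets of subgames such that each subgame is
equivalent to its image. -/
def GEquiv {P : Type} (pe : P → P → Prop) : Game P → Game P → Prop
  | .top, .top => True
  | .bot, .bot => True
  | .node p o s, .node q o' t =>
    pe p q ∧ o = o' ∧
    ∃ e : {g // g ∈ s} ≃ {g // g ∈ t}, ∀ g : {g // g ∈ s}, GEquiv pe g.1 (e g).1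
  | _, _ => False
termination_by g _ => sizeOf g
decreasing_by
  exact Game.sizeOf_lt_node g.2

/-- Number of positions of a game. -/
def Game.size {P : Type} : Game P → ℕ
  | .top => 1
  | .bot => 1
  | .node _ _ subs => 1 + (subs.attach.map fun g => Game.size g.1).sum
termination_by g => sizeOf g
decreasing_by
  exact Game.sizeOf_lt_node g.2

/-! ### Model checking games -/

/-- Positions of extended model checking games: a structure, the current set
`X`, and a formula. -/
abbrev EPos : Type := Struc × Finset ℕ × MSO

/-- Positions of classical model checking games. -/
abbrev CPos : Type := Struc × MSO

/-- Equivalence of positions: same `X ⊆ H₁ ∩ H₂`, same formula, and an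
isomorphism between the structures fixing `X` pointwise. -/
def PosEquivE (p q : EPos) : Prop :=
  p.2.1 = q.2.1 ∧ p.2.2 = q.2.2 ∧
  p.2.1 ⊆ p.1.univ ∧ p.2.1 ⊆ q.1.univ ∧
  ∃ h : ℕ → ℕ, Iso p.1 q.1 h ∧ ∀ a ∈ p.2.1, h a = a

/-- Equivalence `≅` of extended model checking games. -/
def GEquivE : Game EPos → Game EPos → Prop := GEquiv PosEquivE

/-- The extended model checking game `EMC(𝔄, X, φ)` (argument order:
formula, structure, set). -/
noncomputable def EMC : MSO → Struc → Finset ℕ → Game EPos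
  | .atom R cs, A, X =>
    Game.node (A.restrict (X ∪ A.nulValues), X, .atom R cs)
      (if ∀ c ∈ cs, (A.nul c).isSome then
        (if Sat A (.atom R cs) then some .falsifier else some .verifier)
       else none) []
  | .natom R cs, A, X =>
    Game.node (A.restrict (X ∪ A.nulValues), X, .natom R cs)
      (if ∀ c ∈ cs, (A.nul c).isSome then
        (if Sat A (.natom R cs) then some .falsifier else some .verifier)
       else none) []
  | .conj φ ψ, A, X =>
    Game.node (A.restrict (X ∪ A.nulValues), X, .conj φ ψ) (some .falsifier)
      [EMC φ A X, EMC ψ A X]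
  | .disj φ ψ, A, X =>
    Game.node (A.restrict (X ∪ A.nulValues), X, .disj φ ψ) (some .verifier)
      [EMC φ A X, EMC ψ A X]
  | .fall c φ, A, X =>
    Game.node (A.restrict (X ∪ A.nulValues), X, .fall c φ) (some .falsifier)
      ((none :: A.univ.toList.map some).map fun u => EMC φ (A.addNul c u) X)
  | .fex c φ, A, X =>
    Game.node (A.restrict (X ∪ A.nulValues), X, .fex c φ) (some .verifier)
      ((none :: A.univ.toList.map some).map fun u => EMC φ (A.addNul c u) X)
  | .sall R φ, A, X =>
    Game.node (A.restrict (X ∪ A.nulValues), X, .sall R φ) (some .falsifier)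
      (A.univ.powerset.toList.map fun U => EMC φ (A.addRel R U) X)
  | .sex R φ, A, X =>
    Game.node (A.restrict (X ∪ A.nulValues), X, .sex R φ) (some .verifier)
      (A.univ.powerset.toList.map fun U => EMC φ (A.addRel R U) X)

/-- The classical model checking game `MC(𝔄, φ)` (argument order:
formula, structure); object quantifiers move only to elements of the universe
(no nil moves). -/
noncomputable def MC : MSO → Struc → Game CPos
  | .atom R cs, A =>
    Game.node (A.restrict A.nulValues, .atom R cs)
      (if Sat A (.atom R cs) then some .falsifier else some .verifier) []
  | .natom R cs, A =>
    Game.node (A.restrict A.nulValues, .natom R cs)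
      (if Sat A (.natom R cs) then some .falsifier else some .verifier) []
  | .conj φ ψ, A =>
    Game.node (A.restrict A.nulValues, .conj φ ψ) (some .falsifier)
      [MC φ A, MC ψ A]
  | .disj φ ψ, A =>
    Game.node (A.restrict A.nulValues, .disj φ ψ) (some .verifier)
      [MC φ A, MC ψ A]
  | .fall c φ, A =>
    Game.node (A.restrict A.nulValues, .fall c φ) (some .falsifier)
      (A.univ.toList.map fun a => MC φ (A.addNul c (some a)))
  | .fex c φ, A =>
    Game.node (A.restrict A.nulValues, .fex c φ) (some .verifier)
      (A.univ.toList.map fun a => MC φ (A.addNul c (some a)))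
  | .sall R φ, A =>
    Game.node (A.restrict A.nulValues, .sall R φ) (some .falsifier)
      (A.univ.powerset.toList.map fun U => MC φ (A.addRel R U))
  | .sex R φ, A =>
    Game.node (A.restrict A.nulValues, .sex R φ) (some .verifier)
      (A.univ.powerset.toList.map fun U => MC φ (A.addRel R U))

/-! ### The algorithms reduce, convert, forget, combine -/

/-- Remove subgames that are equivalent (`≅`) to an already kept one. -/
noncomputable def dedupEquiv : List (Game EPos) → List (Game EPos)
  | [] => []
  | g :: gs =>
    let r := dedupEquiv gs
    if ∃ g' ∈ r, GEquivE g g' then r else g :: r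

/-- The algorithm `reduce`. -/
noncomputable def reduce : Game EPos → Game EPos
  | .top => .top
  | .bot => .bot
  | .node p o subs =>
    if p.2.2.IsAtomic then Game.eval (Game.node p o subs)
    else
      let rs := subs.attach.map fun g => reduce g.1
      if p.2.2.IsUniversal ∧ Game.bot ∈ rs then Game.bot
      else if p.2.2.IsExistential ∧ Game.top ∈ rs then Game.top
      else
        let kept := dedupEquiv (rs.filter fun g => decide (g ≠ Game.top ∧ g ≠ Game.bot))
        if kept = [] then Game.eval (Game.node p o ([] : List (Game EPos)))
        else Game.node p o kept
termination_by g => sizeOf g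
decreasing_by
  exact Game.sizeOf_lt_node g.2

/-- Whether a game is a node whose position's structure is fully interpreted. -/
def Game.IsFullNodeE : Game EPos → Prop
  | .node q _ _ => q.1.FullyInterpreted
  | _ => False

/-- The algorithm `convert`, turning an extended model checking game into a
classical model checking game by keeping exactly the subgames whose position's
structure is fully interpreted. -/
noncomputable def convert : Game EPos → Game CPos
  | .top => .top
  | .bot => .bot
  | .node p o subs =>
    Game.node (p.1.restrict p.1.nulValues, p.2.2) o
      (subs.attach.filterMap fun g =>
        if g.1.IsFullNodeE then some (convert g.1) else none)
termination_by g => sizeOf g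
decreasing_by
  exact Game.sizeOf_lt_node g.2

/-- The algorithm `forget(𝒢, x)`. -/
noncomputable def forget : Game EPos → ℕ → Game EPos
  | .top, _ => .top
  | .bot, _ => .bot
  | .node p o subs, x =>
    let H := p.1
    let p' : EPos :=
      if ∃ c ∈ H.voc.nulls, H.nul c = some x then (H, p.2.1.erase x, p.2.2)
      else (H.restrict (H.univ.erase x), p.2.1.erase x, p.2.2)
    reduce (Game.node p' o (subs.attach.map fun g => forget g.1 x))
termination_by g _ => sizeOf g
decreasing_by
  exact Game.sizeOf_lt_node g.2

/-- A pair of subgames that `combine` recurses on: both are nodes with the same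
principal subformula and compatible structures. -/
def PairOk : Game EPos → Game EPos → Prop
  | .node p _ _, .node q _ _ => p.2.2 = q.2.2 ∧ Compatible p.1 q.1
  | _, _ => False

/-- The algorithm `combine(𝒢₁, 𝒢₂)`. -/
noncomputable def combine : Game EPos → Game EPos → Game EPos
  | .node p1 o1 s1, .node p2 _ s2 =>
    reduce (Game.node (p1.1.union p2.1, p1.2.1 ∪ p2.2.1, p1.2.2) o1
      ((s1.attach.flatMap fun g1 => s2.attach.map fun g2 => (g1, g2)).filterMap
        fun gg => if PairOk gg.1.1 gg.2.1 then some (combine gg.1.1 gg.2.1) else none))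
  | g, _ => g
termination_by g1 g2 => sizeOf g1 + sizeOf g2
decreasing_by
  have h1 := List.sizeOf_lt_of_mem gg.1.2
  have h2 := List.sizeOf_lt_of_mem gg.2.2
  simp only [Game.node.sizeOf_spec]
  omega

/-! ### Iterated exponentials and minima -/

/-- `iterexp t x = exp^t(x)`, the `t`-fold iterated exponential. -/
def iterexp : ℕ → ℕ → ℕ
  | 0, x => x
  | t + 1, x => 2 ^ iterexp t x

/-- `r` is the minimum of the set `V ⊆ ℤ`, in `WithTop ℤ` (with `min ∅ = ⊤`). -/
def IsMinZ (r : WithTop ℤ) (V : Set ℤ) : Prop :=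
  (∀ v ∈ V, r ≤ (v : WithTop ℤ)) ∧ (V = ∅ → r = ⊤) ∧
  (V.Nonempty → ∃ v ∈ V, r = (v : WithTop ℤ))

/-- `r` is the minimum of the set `V ⊆ WithTop ℤ` (with `min ∅ = ⊤`). -/
def IsMinW (r : WithTop ℤ) (V : Set (WithTop ℤ)) : Prop :=
  (∀ v ∈ V, r ≤ v) ∧ (V = ∅ → r = ⊤) ∧ (V.Nonempty → r ∈ V)

/-! ### Tree decompositions -/

/-- Rooted trees with bags at the nodes. -/
inductive RTree where
  | node (bag : Finset ℕ) (children : List RTree)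

theorem RTree.sizeOf_lt_node {b : Finset ℕ} {cs : List RTree} {c : RTree}
    (h : c ∈ cs) : sizeOf c < sizeOf (RTree.node b cs) := by
  have := List.sizeOf_lt_of_mem h
  simp only [RTree.node.sizeOf_spec]
  omega

def RTree.bag : RTree → Finset ℕ
  | .node b _ => b

/-- The subtree at an address (a node of the tree is identified with the list
of child indices leading to it from the root). -/
def RTree.subtreeAt : RTree → List ℕ → Option RTree
  | t, [] => some t
  | .node _ cs, i :: is =>
    match cs[i]? with
    | some c => c.subtreeAt is
    | none => none

/-- The bag at an address. -/
def RTree.bagAt (t : RTree) (p : List ℕ) : Option (Finset ℕ) :=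
  (t.subtreeAt p).map RTree.bag

/-- All objects occurring in bags of the tree (`Aᵢ` for the subtree at `i`). -/
def RTree.allObjs : RTree → Finset ℕ
  | .node b cs => b ∪ (cs.attach.map fun c => RTree.allObjs c.1).foldr (· ∪ ·) ∅
termination_by t => sizeOf t
decreasing_by
  exact RTree.sizeOf_lt_node c.2

/-- The number of nodes `|T|` of the tree. -/
def RTree.count : RTree → ℕ
  | .node _ cs => 1 + (cs.attach.map fun c => RTree.count c.1).sum
termination_by t => sizeOf t
decreasing_by
  exact RTree.sizeOf_lt_node c.2

/-- Longest common prefix of two addresses. -/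
def lcp : List ℕ → List ℕ → List ℕ
  | a :: as, b :: bs => if a = b then a :: lcp as bs else []
  | _, _ => []

/-- `(𝒯, 𝒳)` (coded as a single bag-labelled rooted tree) is a tree
decomposition of the relational structure `A`: bags are subsets of the universe
covering it, every tuple of every relation is contained in some bag, and if `r`
lies on the path between `p` and `q` then `X_p ∩ X_q ⊆ X_r`. -/
structure IsTreeDecomp (A : Struc) (t : RTree) : Prop where
  bags_sub : ∀ p b, t.bagAt p = some b → b ⊆ A.univ
  covers : ∀ a ∈ A.univ, ∃ p b, t.bagAt p = some b ∧ a ∈ b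
  rel_covers : ∀ R tup, A.rel R tup → ∃ p b, t.bagAt p = some b ∧ ∀ x ∈ tup, x ∈ b
  connected : ∀ p q r bp bq br, t.bagAt p = some bp → t.bagAt q = some bq →
    t.bagAt r = some br → lcp p q <+: r → (r <+: p ∨ r <+: q) → bp ∩ bq ⊆ br

/-- The width of the tree decomposition is at most `w`: every bag has at most
`w + 1` elements. -/
def TDWidthLE (t : RTree) (w : ℕ) : Prop :=
  ∀ p b, t.bagAt p = some b → b.card ≤ w + 1

/-- A node of a nice tree decomposition is a leaf (singleton bag), an introduce
node, a forget node, or a join node. -/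
def RTree.NiceStep : RTree → Prop
  | .node b [] => ∃ x, b = {x}
  | .node b [c] =>
      (∃ x, x ∉ c.allObjs ∧ b = insert x c.bag) ∨ (∃ x ∈ c.bag, b = c.bag.erase x)
  | .node b [c₁, c₂] => b = c₁.bag ∧ b = c₂.bag
  | .node _ _ => False

/-- A nice tree decomposition: every node is a leaf, introduce, forget, or join
node. -/
def RTree.Nice (t : RTree) : Prop := ∀ p s, t.subtreeAt p = some s → s.NiceStep

/-! ### The dynamic programming algorithm -/

/-- `ValidAssign Rbar X U`: `U` is an assignment `(U₁, …, U_l)` of subsets of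
`X` to the free unary relation symbols in `Rbar` (normalized to `∅` outside
`Rbar`). -/
def ValidAssign (Rbar X : Finset ℕ) (U : ℕ → Finset ℕ) : Prop :=
  (∀ R ∈ Rbar, U R ⊆ X) ∧ ∀ R ∉ Rbar, U R = ∅

/-- `W` matches `U` on the bag `Xi` (componentwise). -/
def Matches (Rbar Xi : Finset ℕ) (W U : ℕ → Finset ℕ) : Prop :=
  ∀ R ∈ Rbar, W R ∩ Xi = U R

/-- The reduced extended model checking game of the `τ`-expansion of `B`
by the assignment `W`. -/
noncomputable def RED (φ : MSO) (Rbar : Finset ℕ) (B : Struc) (Xi : Finset ℕ)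
    (W : ℕ → Finset ℕ) : Game EPos :=
  reduce (EMC φ (B.addRels Rbar W) Xi)

/-- The value `valᵢ(ℛ)` should be the minimum of `Σ αₖ |R_k^{𝔄ᵢ'} ∖ Xᵢ|` over
the matching expansions equivalent to `ℛ`; this is the summand for one `W`. -/
def cost (α : ℕ → ℤ) (Rbar : Finset ℕ) (X : Finset ℕ) (W : ℕ → Finset ℕ) : ℤ :=
  ∑ R ∈ Rbar, α R * (((W R) \ X).card : ℤ)

/-- Invariant 12 at a node with substructure `Ai` and bag `Xi`, for the
table `S` and values `val`. -/
def Invariant (φ : MSO) (α : ℕ → ℤ) (Rbar : Finset ℕ) (Ai : Struc) (Xi : Finset ℕ)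
    (S : (ℕ → Finset ℕ) → Set (Game EPos)) (val : Game EPos → WithTop ℤ) : Prop :=
  ∀ U, ValidAssign Rbar Xi U →
    ((∀ W, ValidAssign Rbar Ai.univ W → Matches Rbar Xi W U →
        RED φ Rbar Ai Xi W ≠ Game.bot →
        ∃! G, G ∈ S U ∧ GEquivE G (RED φ Rbar Ai Xi W)) ∧
     (∀ G ∈ S U, G ≠ Game.bot ∧
        ∃ W, ValidAssign Rbar Ai.univ W ∧ Matches Rbar Xi W U ∧
          GEquivE (RED φ Rbar Ai Xi W) G) ∧
     (∀ G ∈ S U, IsMinZ (val G)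
        {v : ℤ | ∃ W, ValidAssign Rbar Ai.univ W ∧ Matches Rbar Xi W U ∧
           GEquivE (RED φ Rbar Ai Xi W) G ∧ RED φ Rbar Ai Xi W ≠ Game.bot ∧
           v = cost α Rbar Xi W}))

end MSOG

/-!
If `reduce (EMC φ B X)` is already decided (`⊤` or `⊥`), it is decided in the same way for every
completion of `B`: every fully interpreted structure with the same universe and relations that
extends the interpretation of the nullary symbols of `B`. This goes by induction on `φ`: `reduce`
short-circuits to a win of the mover only if some move is won in all completions, and returns a
win of the opponent only if every move is. A decided atom needs an interpreted constant (arity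
`≥ 1`), so the universe is then nonempty, and a `nil` move of an object quantifier can be completed
by an arbitrary element.

For fully interpreted `B`, the undecided subgames kept by `reduce` whose structures stay fully
interpreted are, up to `≅`, the moves of the classical game whose outcome is not already forced.
Hence `convert (reduce (EMC φ B X))` has the outcome of `MC φ B`, the truth value of `B ⊨ φ`, and
the outcome of `convert` is invariant under `≅`.
-/

namespace MSOG

attribute [local instance] Classical.propDecidable

/-! ### Outcomes of games -/

def Player.opp : Player → Player
  | .falsifier => .verifier
  | .verifier => .falsifier

def Player.Claims : Player → Prop → Prop
  | .verifier, b => b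
  | .falsifier, b => ¬ b

lemma Player.eq_or_eq_opp (pl o : Player) : pl = o ∨ pl = o.opp := by
  cases pl <;> cases o <;> simp [Player.opp]

lemma Player.opp_ne (pl : Player) : pl.opp ≠ pl := by
  cases pl <;> simp [Player.opp]

lemma Player.claims_opp (pl : Player) (b : Prop) : pl.opp.Claims b ↔ ¬ pl.Claims b := by
  cases pl <;> simp [Player.opp, Player.Claims]

lemma Player.exists_claims (b : Prop) : ∃ pl : Player, pl.Claims b := by
  by_cases hb : b
  · exact ⟨.verifier, hb⟩
  · exact ⟨.falsifier, hb⟩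

def Game.ofWinner {P : Type} : Player → Game P
  | .verifier => .top
  | .falsifier => .bot

lemma Game.ofWinner_injective {P : Type} :
    Function.Injective (Game.ofWinner : Player → Game P) := by
  intro pl pl' h
  cases pl <;> cases pl' <;> first | rfl | cases h

@[simp] lemma Game.ofWinner_inj {P : Type} {pl pl' : Player} :
    (Game.ofWinner pl : Game P) = Game.ofWinner pl' ↔ pl = pl' :=
  Game.ofWinner_injective.eq_iff

@[simp] lemma Game.node_ne_ofWinner {P : Type} (p : P) (o : Option Player) (s : List (Game P))
    (pl : Player) : Game.node p o s ≠ Game.ofWinner pl := by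
  cases pl <;> simp [Game.ofWinner]

lemma Game.exists_eq_ofWinner_iff {P : Type} {g : Game P} :
    (∃ pl, g = Game.ofWinner pl) ↔ g = .top ∨ g = .bot :=
  ⟨fun ⟨pl, h⟩ => by cases pl <;> simp [h, Game.ofWinner],
   fun h => h.elim (fun h => ⟨.verifier, h⟩) (fun h => ⟨.falsifier, h⟩)⟩

lemma Game.forall_ne_ofWinner_iff {P : Type} {g : Game P} :
    (∀ pl, g ≠ Game.ofWinner pl) ↔ g ≠ .top ∧ g ≠ .bot := by
  rw [← not_or, ← Game.exists_eq_ofWinner_iff, not_exists]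

@[simp] lemma Game.eval_ofWinner {P : Type} (pl : Player) :
    (Game.ofWinner pl : Game P).eval = Game.ofWinner pl := by
  cases pl <;> simp [Game.ofWinner, Game.eval]

lemma Game.eval_node_none {P : Type} (p : P) (s : List (Game P)) :
    (Game.node p none s).eval = .node p none (s.map Game.eval) := by
  rw [Game.eval]
  simp

lemma Game.eval_node_eq_ofWinner_self {P : Type} (p : P) (o : Player) (s : List (Game P)) :
    (Game.node p (some o) s).eval = .ofWinner o ↔ ∃ g ∈ s, g.eval = .ofWinner o := by
  rw [Game.eval.eq_def]
  cases o <;> simp only [Game.ofWinner, List.map_subtype, List.unattach_attach] <;>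
    split_ifs <;> simp_all

lemma Game.eval_node_eq_ofWinner_opp {P : Type} (p : P) (o : Player) (s : List (Game P)) :
    (Game.node p (some o) s).eval = .ofWinner o.opp ↔ ∀ g ∈ s, g.eval = .ofWinner o.opp := by
  rw [Game.eval.eq_def]
  cases o <;> simp only [Game.ofWinner, Player.opp, List.map_subtype, List.unattach_attach] <;>
    split_ifs <;> simp_all

@[simp] lemma Game.eval_node_nil {P : Type} (p : P) (o : Player) :
    (Game.node p (some o) []).eval = .ofWinner o.opp :=
  (Game.eval_node_eq_ofWinner_opp p o []).2 (by simp)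

def Game.Decides {P : Type} (g : Game P) (b : Prop) : Prop :=
  ∀ pl, g.eval = .ofWinner pl ↔ pl.Claims b

lemma Game.decides_ofWinner {P : Type} {pl : Player} {b : Prop} :
    (Game.ofWinner pl : Game P).Decides b ↔ pl.Claims b := by
  refine ⟨fun h => (h pl).1 (Game.eval_ofWinner pl), fun h pl' => ?_⟩
  rw [Game.eval_ofWinner, Game.ofWinner_inj]
  rcases Player.eq_or_eq_opp pl' pl with rfl | rfl
  · simpa using h
  · simpa [Player.claims_opp, h, eq_comm] using Player.opp_ne pl

lemma Game.Decides.eval_eq_ofWinner_opp_iff {P : Type} {g : Game P} {b : Prop}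
    (h : g.Decides b) (pl : Player) : g.eval = .ofWinner pl.opp ↔ g.eval ≠ .ofWinner pl := by
  rw [h, ne_eq, h pl, Player.claims_opp]

lemma Game.Decides.eval_eq {P : Type} {g g' : Game P} {b : Prop} (h : g.Decides b)
    (h' : g'.Decides b) : g.eval = g'.eval := by
  obtain ⟨pl, hpl⟩ := Player.exists_claims b
  rw [(h pl).2 hpl, (h' pl).2 hpl]

lemma Game.decides_node {P ι : Type} (p : P) (o : Player) (l : List ι) (G : ι → Game P)
    {b : Prop} (hG : ∀ i ∈ l, ∃ b', (G i).Decides b')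
    (hb : o.Claims b ↔ ∃ i ∈ l, (G i).eval = .ofWinner o) :
    (Game.node p (some o) (l.map G)).Decides b := by
  intro pl
  rcases Player.eq_or_eq_opp pl o with rfl | rfl
  · simp only [Game.eval_node_eq_ofWinner_self, List.mem_map, hb]
    aesop
  · rw [Game.eval_node_eq_ofWinner_opp, List.forall_mem_map, Player.claims_opp, hb]
    push Not
    refine forall₂_congr fun i hi => ?_
    obtain ⟨b', hb'⟩ := hG i hi
    exact hb'.eval_eq_ofWinner_opp_iff o

lemma Game.decides_node_nil {P : Type} (p : P) (o : Player) {b : Prop} (hb : ¬ o.Claims b) :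
    (Game.node p (some o) []).Decides b :=
  Game.decides_node p o ([] : List Empty) nofun (by simp) (by simpa using hb)

lemma decides_MC (φ : MSO) (A : Struc) : (MC φ A).Decides (Sat A φ) := by
  induction φ generalizing A with
  | atom R cs | natom R cs =>
    rw [MC]
    split_ifs <;> exact Game.decides_node_nil _ _ (by simpa [Player.Claims])
  | conj φ ψ ihφ ihψ | disj φ ψ ihφ ihψ =>
    refine Game.decides_node _ _ [φ, ψ] (MC · A) ?_ ?_
    · simp only [List.mem_cons, List.not_mem_nil, or_false, forall_eq_or_imp, forall_eq]
      exact ⟨⟨_, ihφ A⟩, ⟨_, ihψ A⟩⟩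
    · simp [ihφ A _, ihψ A _, Sat, Player.Claims, imp_iff_not_or]
  | fall c φ ih | fex c φ ih =>
    refine Game.decides_node _ _ A.univ.toList (fun a => MC φ (A.addNul c (some a))) ?_ ?_
    · exact fun a _ => ⟨_, ih _⟩
    · simp [ih _ _, Sat, Player.Claims]
  | sall R φ ih | sex R φ ih =>
    refine Game.decides_node _ _ A.univ.powerset.toList (fun U => MC φ (A.addRel R U)) ?_ ?_
    · exact fun U _ => ⟨_, ih _⟩
    · simp [ih _ _, Sat, Player.Claims]

/-! ### Game equivalence and `convert` -/

lemma exists_mem_congr_of_equiv {α : Type*} {s t : List α} (e : {x // x ∈ s} ≃ {x // x ∈ t})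
    {p q : α → Prop} (h : ∀ x, p x.1 ↔ q (e x).1) : (∃ x ∈ s, p x) ↔ ∃ x ∈ t, q x := by
  simpa using e.exists_congr (q := fun y => q y.1) h

lemma forall_mem_congr_of_equiv {α : Type*} {s t : List α} (e : {x // x ∈ s} ≃ {x // x ∈ t})
    {p q : α → Prop} (h : ∀ x, p x.1 ↔ q (e x).1) : (∀ x ∈ s, p x) ↔ ∀ x ∈ t, q x := by
  simpa using e.forall_congr (q := fun y => q y.1) h

lemma gequiv_top_left {P : Type} {pe : P → P → Prop} {g : Game P} :
    GEquiv pe .top g ↔ g = .top := by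
  cases g <;> simp [GEquiv]

lemma gequiv_bot_left {P : Type} {pe : P → P → Prop} {g : Game P} :
    GEquiv pe .bot g ↔ g = .bot := by
  cases g <;> simp [GEquiv]

lemma gequiv_node_left {P : Type} {pe : P → P → Prop} {p : P} {o : Option Player}
    {s : List (Game P)} {g : Game P} :
    GEquiv pe (.node p o s) g ↔ ∃ q t, g = .node q o t ∧ pe p q ∧
      ∃ e : {g // g ∈ s} ≃ {g // g ∈ t}, ∀ g, GEquiv pe g.1 (e g).1 := by
  cases g <;> simp [GEquiv, eq_comm, and_left_comm]

lemma gequiv_ofWinner_refl {P : Type} {pe : P → P → Prop} (pl : Player) :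
    GEquiv pe (.ofWinner pl) (.ofWinner pl) := by
  cases pl <;> simp [Game.ofWinner, GEquiv]

lemma gequiv_node_refl {P : Type} {pe : P → P → Prop} {p : P} (o : Option Player)
    {s : List (Game P)} (hp : pe p p) (hs : ∀ g ∈ s, GEquiv pe g g) :
    GEquiv pe (.node p o s) (.node p o s) :=
  gequiv_node_left.2 ⟨p, s, rfl, hp, Equiv.refl _, fun g => hs g.1 g.2⟩

lemma Iso.refl (A : Struc) : Iso A A id :=
  ⟨rfl, Set.bijOn_id _, fun _ _ => Iff.rfl, fun _ _ _ h => h, fun _ _ t _ => by simp⟩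

lemma Iso.fullyInterpreted_iff {A B : Struc} {h : ℕ → ℕ} (hi : Iso A B h) :
    A.FullyInterpreted ↔ B.FullyInterpreted := by
  unfold Struc.FullyInterpreted
  rw [← hi.voc_eq]
  exact forall₂_congr hi.interp_iff

lemma GEquivE.isFullNodeE_iff {g g' : Game EPos} (h : GEquivE g g') :
    g.IsFullNodeE ↔ g'.IsFullNodeE := by
  cases g with
  | top => rw [gequiv_top_left.1 h]
  | bot => rw [gequiv_bot_left.1 h]
  | node p o s =>
    obtain ⟨q, t, rfl, ⟨-, -, -, -, f, hf, -⟩, -⟩ := gequiv_node_left.1 h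
    exact hf.fullyInterpreted_iff

lemma convert_node (p : EPos) (o : Option Player) (s : List (Game EPos)) :
    convert (.node p o s) =
      .node (p.1.restrict p.1.nulValues, p.2.2) o ((s.filter (·.IsFullNodeE)).map convert) := by
  rw [convert, ← List.filterMap_eq_map', List.filterMap_filter]
  simp [List.filterMap_subtype]

@[simp] lemma convert_ofWinner (pl : Player) : convert (.ofWinner pl) = .ofWinner pl := by
  cases pl <;> simp [Game.ofWinner, convert]

lemma eval_convert_node_eq_ofWinner_self (p : EPos) (o : Player) (s : List (Game EPos)) :
    (convert (.node p (some o) s)).eval = .ofWinner o ↔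
      ∃ g ∈ s, g.IsFullNodeE ∧ (convert g).eval = .ofWinner o := by
  simp [convert_node, Game.eval_node_eq_ofWinner_self, and_assoc]

lemma eval_convert_node_eq_ofWinner_opp (p : EPos) (o : Player) (s : List (Game EPos)) :
    (convert (.node p (some o) s)).eval = .ofWinner o.opp ↔
      ∀ g ∈ s, g.IsFullNodeE → (convert g).eval = .ofWinner o.opp := by
  simp only [convert_node, Game.eval_node_eq_ofWinner_opp, List.forall_mem_map, List.mem_filter,
    decide_eq_true_eq, and_imp]

theorem GEquivE.eval_convert_eq_ofWinner_iff :
    ∀ {g g' : Game EPos}, GEquivE g g' → ∀ pl,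
      (convert g).eval = .ofWinner pl ↔ (convert g').eval = .ofWinner pl
  | .top, _, h, _ => by rw [gequiv_top_left.1 h]
  | .bot, _, h, _ => by rw [gequiv_bot_left.1 h]
  | .node p o s, _, h, pl => by
    obtain ⟨q, t, rfl, -, e, he⟩ := gequiv_node_left.1 h
    have hsub : ∀ g : {g // g ∈ s}, (g.1.IsFullNodeE ↔ (e g).1.IsFullNodeE) ∧
        ((convert g.1).eval = .ofWinner pl ↔ (convert (e g).1).eval = .ofWinner pl) :=
      fun g => ⟨GEquivE.isFullNodeE_iff (he g), GEquivE.eval_convert_eq_ofWinner_iff (he g) pl⟩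
    rcases o with _ | o
    · simp [convert_node, Game.eval_node_none]
    rcases Player.eq_or_eq_opp pl o with rfl | rfl
    · simp only [eval_convert_node_eq_ofWinner_self]
      exact exists_mem_congr_of_equiv e fun g => and_congr (hsub g).1 (hsub g).2
    · simp only [eval_convert_node_eq_ofWinner_opp]
      exact forall_mem_congr_of_equiv e fun g => imp_congr (hsub g).1 (hsub g).2
termination_by g => sizeOf g
decreasing_by exact Game.sizeOf_lt_node g.2

/-! ### The algorithm `reduce` -/

lemma dedupEquiv_subset (l : List (Game EPos)) : dedupEquiv l ⊆ l := by
  induction l with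
  | nil => simp [dedupEquiv]
  | cons g l ih =>
    rw [dedupEquiv]
    split_ifs
    · exact List.Subset.trans ih (List.subset_cons_self g l)
    · exact List.cons_subset_cons g ih

lemma dedupEquiv_eq_nil {l : List (Game EPos)} : dedupEquiv l = [] ↔ l = [] := by
  cases l with
  | nil => simp [dedupEquiv]
  | cons g l =>
    rw [dedupEquiv]
    split_ifs with h
    · obtain ⟨g', hg', -⟩ := h
      simpa using List.ne_nil_of_mem hg'
    · simp

lemma exists_mem_dedupEquiv {l : List (Game EPos)} (hrefl : ∀ g ∈ l, GEquivE g g)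
    {g : Game EPos} (hg : g ∈ l) : ∃ g' ∈ dedupEquiv l, GEquivE g g' := by
  induction l with
  | nil => simp at hg
  | cons a l ih =>
    have ih' := fun hg => ih (fun g hg => hrefl g (List.mem_cons_of_mem a hg)) hg
    rw [dedupEquiv]
    rcases List.mem_cons.1 hg with rfl | hg
    · split_ifs with h
      · exact h
      · exact ⟨g, List.mem_cons_self, hrefl g List.mem_cons_self⟩
    · split_ifs
      · exact ih' hg
      · obtain ⟨g', hg', hgg'⟩ := ih' hg
        exact ⟨g', List.mem_cons_of_mem a hg', hgg'⟩

noncomputable def keptOf (s : List (Game EPos)) : List (Game EPos) :=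
  dedupEquiv ((s.map reduce).filter fun g => decide (g ≠ Game.top ∧ g ≠ Game.bot))

lemma exists_of_mem_keptOf {s : List (Game EPos)} {g : Game EPos} (hg : g ∈ keptOf s) :
    ∃ h ∈ s, reduce h = g ∧ ∀ pl, g ≠ .ofWinner pl := by
  obtain ⟨⟨h, hh, rfl⟩, hne⟩ := by simpa using dedupEquiv_subset _ hg
  exact ⟨h, hh, rfl, Game.forall_ne_ofWinner_iff.2 hne⟩

lemma exists_mem_keptOf {s : List (Game EPos)} (hrefl : ∀ h ∈ s, GEquivE (reduce h) (reduce h))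
    {h : Game EPos} (hh : h ∈ s) (hund : ∀ pl, reduce h ≠ .ofWinner pl) :
    ∃ g ∈ keptOf s, GEquivE (reduce h) g := by
  refine exists_mem_dedupEquiv (by simpa using fun h hh _ _ => hrefl h hh) ?_
  simpa using ⟨⟨h, hh, rfl⟩, Game.forall_ne_ofWinner_iff.1 hund⟩

lemma exists_reduce_eq_ofWinner_of_keptOf_eq_nil {s : List (Game EPos)} (hk : keptOf s = [])
    {h : Game EPos} (hh : h ∈ s) : ∃ pl, reduce h = .ofWinner pl := by
  rw [keptOf, dedupEquiv_eq_nil, List.filter_eq_nil_iff] at hk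
  simpa [Game.exists_eq_ofWinner_iff, or_iff_not_imp_left] using hk _ (List.mem_map_of_mem hh)

-- The value on atoms is junk: their owner in `EMC` depends on the structure.
def MSO.mover : MSO → Player
  | .conj _ _ | .fall _ _ | .sall _ _ => .falsifier
  | _ => .verifier

noncomputable def MSO.moves : MSO → Struc → List (Struc × MSO)
  | .conj φ ψ, B | .disj φ ψ, B => [(B, φ), (B, ψ)]
  | .fall c φ, B | .fex c φ, B => (none :: B.univ.toList.map some).map fun u => (B.addNul c u, φ)
  | .sall R φ, B | .sex R φ, B => B.univ.powerset.toList.map fun U => (B.addRel R U, φ)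
  | _, _ => []

lemma EMC_eq_node_moves {φ : MSO} (hφ : ¬ φ.IsAtomic) (B : Struc) (X : Finset ℕ) :
    EMC φ B X = .node (B.restrict (X ∪ B.nulValues), X, φ) (some φ.mover)
      ((φ.moves B).map fun m => EMC m.2 m.1 X) := by
  cases φ <;> simp_all [EMC, MSO.moves, MSO.mover, MSO.IsAtomic]

lemma reduce_node_mover {φ : MSO} (hφ : ¬ φ.IsAtomic) (B : Struc) (X : Finset ℕ)
    (s : List (Game EPos)) :
    reduce (.node (B, X, φ) (some φ.mover) s) =
      if .ofWinner φ.mover ∈ s.map reduce then .ofWinner φ.mover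
      else if keptOf s = [] then .ofWinner φ.mover.opp
      else .node (B, X, φ) (some φ.mover) (keptOf s) := by
  rw [reduce, if_neg hφ]
  cases φ <;> simp_all [MSO.IsAtomic, MSO.IsUniversal, MSO.IsExistential, MSO.mover,
    Game.ofWinner, Player.opp, keptOf]

/-! ### Completions and moves -/

structure Struc.Completes (C B : Struc) : Prop where
  voc_eq : C.voc = B.voc
  univ_eq : C.univ = B.univ
  rel_eq : C.rel = B.rel
  full : C.FullyInterpreted
  nul_eq : ∀ c x, B.nul c = some x → C.nul c = some x

lemma Struc.Completes.refl {B : Struc} (hB : B.FullyInterpreted) : B.Completes B :=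
  ⟨rfl, rfl, rfl, hB, fun _ _ => id⟩

lemma Struc.fullyInterpreted_addNul_some {A : Struc} (h : A.FullyInterpreted) (c a : ℕ) :
    (A.addNul c (some a)).FullyInterpreted := by
  intro d hd
  by_cases hdc : d = c
  · simp [Struc.addNul, hdc]
  · simpa [Struc.addNul, hdc] using h d (by simpa [Struc.addNul, Vocab.addNul, hdc] using hd)

lemma Struc.not_fullyInterpreted_addNul_none (A : Struc) (c : ℕ) :
    ¬ (A.addNul c none).FullyInterpreted := fun h => by
  simpa [Struc.addNul] using h c (by simp [Struc.addNul, Vocab.addNul])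

lemma Struc.fullyInterpreted_addRel {A : Struc} (h : A.FullyInterpreted) (R : ℕ)
    (U : Finset ℕ) : (A.addRel R U).FullyInterpreted :=
  h

lemma Struc.mem_nulValues {B : Struc} {c x : ℕ} (hc : c ∈ B.voc.nulls)
    (hx : B.nul c = some x) : x ∈ B.nulValues :=
  Finset.mem_biUnion.2 ⟨c, hc, by simp [hx]⟩

lemma Struc.fullyInterpreted_restrict_iff {B : Struc} {s : Finset ℕ} (hs : B.nulValues ⊆ s) :
    (B.restrict s).FullyInterpreted ↔ B.FullyInterpreted := by
  refine forall₂_congr fun c hc => ?_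
  cases hx : B.nul c with
  | none => simp [Struc.restrict, hx]
  | some x => simp [Struc.restrict, hx, hs (Struc.mem_nulValues hc hx)]

lemma Struc.Completes.addNul {C B : Struc} (h : C.Completes B) (c : ℕ) {a : ℕ} {u : Option ℕ}
    (hu : u = none ∨ u = some a) : (C.addNul c (some a)).Completes (B.addNul c u) where
  voc_eq := by simp [Struc.addNul, h.voc_eq]
  univ_eq := h.univ_eq
  rel_eq := h.rel_eq
  full := Struc.fullyInterpreted_addNul_some h.full c a
  nul_eq d x hx := by
    by_cases hdc : d = c
    · rcases hu with rfl | rfl <;> simp_all [Struc.addNul]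
    · simp_all [Struc.addNul, h.nul_eq d x]

lemma Struc.Completes.addRel {C B : Struc} (h : C.Completes B) (R : ℕ) (U : Finset ℕ) :
    (C.addRel R U).Completes (B.addRel R U) where
  voc_eq := by simp [Struc.addRel, h.voc_eq]
  univ_eq := h.univ_eq
  rel_eq := by simp [Struc.addRel, h.rel_eq]
  full := h.full
  nul_eq := h.nul_eq

lemma Struc.Completes.mapM_nul_eq {C B : Struc} (h : C.Completes B) {cs : List ℕ}
    (hcs : ∀ c ∈ cs, (B.nul c).isSome) : cs.mapM C.nul = cs.mapM B.nul := by
  induction cs with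
  | nil => rfl
  | cons c cs ih =>
    obtain ⟨x, hx⟩ := Option.isSome_iff_exists.1 (hcs c List.mem_cons_self)
    simp [List.mapM_cons, hx, h.nul_eq c x hx, ih fun d hd => hcs d (List.mem_cons_of_mem c hd)]

lemma Struc.WF.addNul {ar : ℕ → ℕ} {A : Struc} (h : A.WF ar) (c : ℕ) {u : Option ℕ}
    (hu : ∀ a ∈ u, a ∈ A.univ) : (A.addNul c u).WF ar where
  rel_wf := h.rel_wf
  nul_wf d x hx := by
    by_cases hdc : d = c
    · simp_all [Struc.addNul, Vocab.addNul]
    · simp only [Struc.addNul, hdc, if_false] at hx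
      obtain ⟨hd, hx⟩ := h.nul_wf d x hx
      exact ⟨Finset.mem_insert_of_mem hd, hx⟩

lemma Struc.WF.addRel {ar : ℕ → ℕ} {A : Struc} (h : A.WF ar) {R : ℕ} (hR : ar R = 1)
    {U : Finset ℕ} (hU : U ⊆ A.univ) : (A.addRel R U).WF ar where
  rel_wf S t ht := by
    by_cases hSR : S = R
    · subst hSR
      obtain ⟨x, hx, rfl⟩ : ∃ x ∈ U, t = [x] := by simpa [Struc.addRel] using ht
      simp [Struc.addRel, Vocab.addRel, hR, hU hx]
    · simp only [Struc.addRel, hSR, if_false] at ht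
      obtain ⟨h1, h2, h3⟩ := h.rel_wf S t ht
      exact ⟨Finset.mem_insert_of_mem h1, h2, h3⟩
  nul_wf := h.nul_wf

structure Admissible (ar : ℕ → ℕ) (B : Struc) (φ : MSO) : Prop where
  wf : B.WF ar
  arity_pos : ∀ R ∈ B.voc.rels, 1 ≤ ar R
  formula_wf : MSO.wf ar B.voc φ

lemma univ_of_mem_moves {φ : MSO} {B : Struc} {m : Struc × MSO} (hm : m ∈ φ.moves B) :
    m.1.univ = B.univ := by
  cases φ <;> simp [MSO.moves] at hm <;> aesop (add norm Struc.addNul, norm Struc.addRel)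

lemma moves_ne_nil {φ : MSO} (hφ : ¬ φ.IsAtomic) (B : Struc) : φ.moves B ≠ [] := by
  cases φ <;> simp_all [MSO.moves, MSO.IsAtomic, ← Finset.nonempty_iff_ne_empty,
    Finset.powerset_nonempty]

lemma sizeOf_lt_of_mem_moves {φ : MSO} {B : Struc} {m : Struc × MSO} (hm : m ∈ φ.moves B) :
    sizeOf m.2 < sizeOf φ := by
  cases φ with
  | atom | natom => simp [MSO.moves] at hm
  | conj φ ψ | disj φ ψ =>
    rcases (by simpa [MSO.moves] using hm : m = (B, φ) ∨ m = (B, ψ)) with rfl | rfl <;>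
      (simp only [MSO.conj.sizeOf_spec, MSO.disj.sizeOf_spec]; omega)
  | fall _ φ | fex _ φ | sall _ φ | sex _ φ =>
    obtain rfl : m.2 = φ := by simp [MSO.moves] at hm; aesop
    simp

lemma Admissible.of_mem_moves {ar : ℕ → ℕ} {B : Struc} {φ : MSO} (h : Admissible ar B φ)
    {m : Struc × MSO} (hm : m ∈ φ.moves B) : Admissible ar m.1 m.2 := by
  obtain ⟨hB, har, hφ⟩ := h
  cases φ with
  | atom | natom => simp [MSO.moves] at hm
  | conj φ ψ | disj φ ψ =>
    rcases (by simpa [MSO.moves] using hm : m = (B, φ) ∨ m = (B, ψ)) with rfl | rfl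
    · exact ⟨hB, har, hφ.1⟩
    · exact ⟨hB, har, hφ.2⟩
  | fall c φ | fex c φ =>
    obtain ⟨u, hu, rfl⟩ : ∃ u : Option ℕ, (∀ a ∈ u, a ∈ B.univ) ∧ m = (B.addNul c u, φ) := by
      simp [MSO.moves] at hm; aesop
    exact ⟨hB.addNul c hu, har, hφ.2⟩
  | sall R φ | sex R φ =>
    obtain ⟨U, hU, rfl⟩ : ∃ U ⊆ B.univ, m = (B.addRel R U, φ) := by
      simp [MSO.moves] at hm; aesop
    refine ⟨hB.addRel hφ.2.1 hU, fun S hS => ?_, hφ.2.2⟩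
    rcases Finset.mem_insert.1 hS with rfl | hS
    · exact hφ.2.1.ge
    · exact har S hS

lemma Struc.Completes.exists_mem_moves {C B : Struc} (h : C.Completes B) {φ : MSO}
    {m : Struc × MSO} (hm : m ∈ φ.moves C) (hfull : m.1.FullyInterpreted) :
    ∃ m' ∈ φ.moves B, m'.2 = m.2 ∧ m.1.Completes m'.1 := by
  cases φ with
  | atom | natom => simp [MSO.moves] at hm
  | conj φ ψ | disj φ ψ =>
    rcases (by simpa [MSO.moves] using hm : m = (C, φ) ∨ m = (C, ψ)) with rfl | rfl
    exacts [⟨(B, φ), by simp [MSO.moves], rfl, h⟩, ⟨(B, ψ), by simp [MSO.moves], rfl, h⟩]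
  | fall c φ | fex c φ =>
    obtain ⟨a, ha, rfl⟩ : ∃ a ∈ C.univ, m = (C.addNul c (some a), φ) := by
      simp [MSO.moves] at hm
      rcases hm with rfl | hm
      · exact absurd hfull (Struc.not_fullyInterpreted_addNul_none C c)
      · aesop
    exact ⟨(B.addNul c (some a), φ), List.mem_map.2 ⟨some a, by simp [← h.univ_eq, ha], rfl⟩,
      rfl, h.addNul c (Or.inr rfl)⟩
  | sall R φ | sex R φ =>
    obtain ⟨U, hU, rfl⟩ : ∃ U ⊆ C.univ, m = (C.addRel R U, φ) := by
      simp [MSO.moves] at hm; aesop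
    exact ⟨(B.addRel R U, φ), List.mem_map.2 ⟨U, by simpa [← h.univ_eq] using hU, rfl⟩, rfl,
      h.addRel R U⟩

lemma Struc.Completes.exists_mem_moves_completes {C B : Struc} (h : C.Completes B)
    (hB : B.univ.Nonempty) {φ : MSO} {m : Struc × MSO} (hm : m ∈ φ.moves B) :
    ∃ m' ∈ φ.moves C, m'.2 = m.2 ∧ m'.1.Completes m.1 := by
  cases φ with
  | atom | natom => simp [MSO.moves] at hm
  | conj φ ψ | disj φ ψ =>
    rcases (by simpa [MSO.moves] using hm : m = (B, φ) ∨ m = (B, ψ)) with rfl | rfl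
    exacts [⟨(C, φ), by simp [MSO.moves], rfl, h⟩, ⟨(C, ψ), by simp [MSO.moves], rfl, h⟩]
  | fall c φ | fex c φ =>
    obtain ⟨u, a, ha, hu, rfl⟩ :
        ∃ u : Option ℕ, ∃ a ∈ B.univ, (u = none ∨ u = some a) ∧ m = (B.addNul c u, φ) := by
      simp [MSO.moves] at hm
      rcases hm with rfl | ⟨a, ha, rfl⟩
      · obtain ⟨a, ha⟩ := hB
        exact ⟨none, a, ha, Or.inl rfl, rfl⟩
      · exact ⟨some a, a, ha, Or.inr rfl, rfl⟩
    exact ⟨(C.addNul c (some a), φ), List.mem_map.2 ⟨some a, by simp [h.univ_eq, ha], rfl⟩,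
      rfl, h.addNul c hu⟩
  | sall R φ | sex R φ =>
    obtain ⟨U, hU, rfl⟩ : ∃ U ⊆ B.univ, m = (B.addRel R U, φ) := by
      simp [MSO.moves] at hm; aesop
    exact ⟨(C.addRel R U, φ), List.mem_map.2 ⟨U, by simpa [h.univ_eq] using hU, rfl⟩, rfl,
      h.addRel R U⟩

lemma claims_sat_iff_exists_mem_moves {C : Struc} (hC : C.FullyInterpreted) {φ : MSO}
    (hφ : ¬ φ.IsAtomic) :
    φ.mover.Claims (Sat C φ) ↔
      ∃ m ∈ φ.moves C, m.1.FullyInterpreted ∧ φ.mover.Claims (Sat m.1 m.2) := by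
  cases φ <;> simp_all [MSO.IsAtomic, MSO.moves, MSO.mover, Player.Claims, Sat, imp_iff_not_or,
    Struc.not_fullyInterpreted_addNul_none, Struc.fullyInterpreted_addNul_some,
    Struc.fullyInterpreted_addRel]

lemma claims_of_forall_completes_move {φ : MSO} (hφ : ¬ φ.IsAtomic) {B : Struc}
    (hB : B.univ.Nonempty) {m : Struc × MSO} (hm : m ∈ φ.moves B)
    (hmove : ∀ D : Struc, D.Completes m.1 → φ.mover.Claims (Sat D m.2)) {C : Struc}
    (hC : C.Completes B) : φ.mover.Claims (Sat C φ) := by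
  obtain ⟨m', hm', hm'2, hm'C⟩ := hC.exists_mem_moves_completes hB hm
  exact (claims_sat_iff_exists_mem_moves hC.full hφ).2
    ⟨m', hm', hm'C.full, hm'2 ▸ hmove _ hm'C⟩

lemma claims_opp_of_forall_moves {φ : MSO} (hφ : ¬ φ.IsAtomic) {B : Struc}
    (hmoves : ∀ m ∈ φ.moves B, ∀ D : Struc, D.Completes m.1 → φ.mover.opp.Claims (Sat D m.2))
    {C : Struc} (hC : C.Completes B) : φ.mover.opp.Claims (Sat C φ) := by
  rw [Player.claims_opp, claims_sat_iff_exists_mem_moves hC.full hφ]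
  rintro ⟨m, hm, hfull, hclaims⟩
  obtain ⟨m', hm', hm'2, hm'C⟩ := hC.exists_mem_moves hm hfull
  exact (Player.claims_opp _ _).1 (hm'2 ▸ hmoves m' hm' _ hm'C) hclaims

/-! ### The invariant of reduced extended model checking games -/

structure ReduceInvariant (φ : MSO) (B : Struc) (X : Finset ℕ) : Prop where
  refl : GEquivE (reduce (EMC φ B X)) (reduce (EMC φ B X))
  nonempty_of_eq_ofWinner {pl : Player} :
    reduce (EMC φ B X) = .ofWinner pl → B.univ.Nonempty
  claims_of_eq_ofWinner {pl : Player} :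
    reduce (EMC φ B X) = .ofWinner pl → ∀ C : Struc, C.Completes B → pl.Claims (Sat C φ)
  isFullNodeE_iff : (∀ pl, reduce (EMC φ B X) ≠ .ofWinner pl) →
    ((reduce (EMC φ B X)).IsFullNodeE ↔ B.FullyInterpreted)
  decides_of_undetermined : (∀ pl, reduce (EMC φ B X) ≠ .ofWinner pl) → B.FullyInterpreted →
    (convert (reduce (EMC φ B X))).Decides (Sat B φ)

section ReduceInvariant

variable {φ : MSO} {B : Struc} {X : Finset ℕ}

lemma ReduceInvariant.decides (h : ReduceInvariant φ B X) (hB : B.FullyInterpreted) :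
    (convert (reduce (EMC φ B X))).Decides (Sat B φ) := by
  by_cases hr : ∃ pl, reduce (EMC φ B X) = .ofWinner pl
  · obtain ⟨pl, hr⟩ := hr
    rw [hr, convert_ofWinner, Game.decides_ofWinner]
    exact h.claims_of_eq_ofWinner hr B (.refl hB)
  · exact h.decides_of_undetermined (not_exists.1 hr) hB

lemma ReduceInvariant.of_eq_ofWinner {pl : Player} (hr : reduce (EMC φ B X) = .ofWinner pl)
    (hB : B.univ.Nonempty) (hclaims : ∀ C : Struc, C.Completes B → pl.Claims (Sat C φ)) :
    ReduceInvariant φ B X where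
  refl := hr ▸ gequiv_ofWinner_refl pl
  nonempty_of_eq_ofWinner _ := hB
  claims_of_eq_ofWinner hr' := by rwa [← Game.ofWinner_inj.1 (hr.symm.trans hr')]
  isFullNodeE_iff hund := absurd hr (hund pl)
  decides_of_undetermined hund := absurd hr (hund pl)

lemma ReduceInvariant.of_eq_node {o : Option Player} {s : List (Game EPos)}
    (hr : reduce (EMC φ B X) = .node (B.restrict (X ∪ B.nulValues), X, φ) o s)
    (hX : X ⊆ B.univ) (hs : ∀ g ∈ s, GEquivE g g)
    (hdec : B.FullyInterpreted → (convert (reduce (EMC φ B X))).Decides (Sat B φ)) :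
    ReduceInvariant φ B X where
  refl := by
    have hXB : X ⊆ (B.restrict (X ∪ B.nulValues)).univ :=
      Finset.subset_inter hX Finset.subset_union_left
    rw [hr]
    exact gequiv_node_refl o ⟨rfl, rfl, hXB, hXB, id, .refl _, fun _ _ => rfl⟩ hs
  nonempty_of_eq_ofWinner hr' := by simp [hr] at hr'
  claims_of_eq_ofWinner hr' := by simp [hr] at hr'
  isFullNodeE_iff _ := hr ▸ Struc.fullyInterpreted_restrict_iff Finset.subset_union_right
  decides_of_undetermined _ := hdec

lemma reduceInvariant_of_isAtomic {ar : ℕ → ℕ} {cs : List ℕ} (hφ : φ.IsAtomic) (hB : B.WF ar)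
    (hX : X ⊆ B.univ) (hcs : cs ≠ []) (hcsB : ∀ c ∈ cs, c ∈ B.voc.nulls)
    (hEMC : EMC φ B X = .node (B.restrict (X ∪ B.nulValues), X, φ)
      (if ∀ c ∈ cs, (B.nul c).isSome then
        (if Sat B φ then some .falsifier else some .verifier) else none) [])
    (hsat : ∀ C : Struc, C.Completes B → (∀ c ∈ cs, (B.nul c).isSome) → (Sat C φ ↔ Sat B φ)) :
    ReduceInvariant φ B X := by
  have hr : reduce (EMC φ B X) = (Game.node (B.restrict (X ∪ B.nulValues), X, φ)
      (if ∀ c ∈ cs, (B.nul c).isSome then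
        (if Sat B φ then some .falsifier else some .verifier) else none) []).eval := by
    rw [hEMC, reduce, if_pos hφ]
  by_cases hi : ∀ c ∈ cs, (B.nul c).isSome
  · have hne : B.univ.Nonempty := by
      obtain ⟨c, hc⟩ := List.exists_mem_of_ne_nil cs hcs
      obtain ⟨x, hx⟩ := Option.isSome_iff_exists.1 (hi c hc)
      exact ⟨x, (hB.nul_wf c x hx).2⟩
    by_cases hs : Sat B φ
    · refine .of_eq_ofWinner (pl := .verifier) ?_ hne fun C hC => (hsat C hC hi).2 hs
      rw [hr, if_pos hi, if_pos hs, Game.eval_node_nil]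
      rfl
    · refine .of_eq_ofWinner (pl := .falsifier) ?_ hne fun C hC => mt (hsat C hC hi).1 hs
      rw [hr, if_pos hi, if_neg hs, Game.eval_node_nil]
      rfl
  · refine .of_eq_node (by rw [hr, if_neg hi, Game.eval_node_none, List.map_nil]) hX (by simp)
      fun hfull => absurd (fun c hc => hfull c (hcsB c hc)) hi

lemma exists_mem_moves_of_mem_keptOf (ih : ∀ m ∈ φ.moves B, ReduceInvariant m.2 m.1 X)
    {g : Game EPos} (hg : g ∈ keptOf ((φ.moves B).map fun m => EMC m.2 m.1 X))
    (hgfull : g.IsFullNodeE) :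
    ∃ m ∈ φ.moves B, m.1.FullyInterpreted ∧ (convert g).Decides (Sat m.1 m.2) := by
  obtain ⟨h, hh, rfl, hund⟩ := exists_of_mem_keptOf hg
  obtain ⟨m, hm, rfl⟩ := List.mem_map.1 hh
  have hmfull := ((ih m hm).isFullNodeE_iff hund).1 hgfull
  exact ⟨m, hm, hmfull, (ih m hm).decides hmfull⟩

lemma exists_mem_keptOf_of_mem_moves (ih : ∀ m ∈ φ.moves B, ReduceInvariant m.2 m.1 X)
    {m : Struc × MSO} (hm : m ∈ φ.moves B) (hmfull : m.1.FullyInterpreted)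
    (hund : ∀ pl, reduce (EMC m.2 m.1 X) ≠ .ofWinner pl) :
    ∃ g ∈ keptOf ((φ.moves B).map fun m => EMC m.2 m.1 X), g.IsFullNodeE ∧
      (convert g).Decides (Sat m.1 m.2) := by
  obtain ⟨g, hg, hequiv⟩ := exists_mem_keptOf (fun h hh => by
    obtain ⟨m, hm, rfl⟩ := List.mem_map.1 hh; exact (ih m hm).refl)
    (List.mem_map_of_mem (f := fun m => EMC m.2 m.1 X) hm) hund
  refine ⟨g, hg, hequiv.isFullNodeE_iff.1 (((ih m hm).isFullNodeE_iff hund).2 hmfull),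
    fun pl => ?_⟩
  rw [← hequiv.eval_convert_eq_ofWinner_iff, (ih m hm).decides hmfull]

lemma decides_convert_node_keptOf (ih : ∀ m ∈ φ.moves B, ReduceInvariant m.2 m.1 X)
    (hφ : ¬ φ.IsAtomic) (hB : B.FullyInterpreted)
    (hnowin : ∀ m ∈ φ.moves B, reduce (EMC m.2 m.1 X) ≠ .ofWinner φ.mover) (p : EPos) :
    (convert (.node p (some φ.mover)
      (keptOf ((φ.moves B).map fun m => EMC m.2 m.1 X)))).Decides (Sat B φ) := by
  rw [convert_node]
  refine Game.decides_node _ _ _ _ (fun g hg => ?_) ?_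
  · obtain ⟨hg, hgfull⟩ := List.mem_filter.1 hg
    obtain ⟨m, -, -, hdec⟩ := exists_mem_moves_of_mem_keptOf ih hg (of_decide_eq_true hgfull)
    exact ⟨_, hdec⟩
  rw [claims_sat_iff_exists_mem_moves hB hφ]
  constructor
  · rintro ⟨m, hm, hmfull, hclaims⟩
    have hund : ∀ pl, reduce (EMC m.2 m.1 X) ≠ .ofWinner pl := by
      intro pl hpl
      rcases Player.eq_or_eq_opp pl φ.mover with rfl | rfl
      · exact hnowin m hm hpl
      · exact (Player.claims_opp _ _).1
          ((ih m hm).claims_of_eq_ofWinner hpl _ (.refl hmfull)) hclaims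
    obtain ⟨g, hg, hgfull, hdec⟩ := exists_mem_keptOf_of_mem_moves ih hm hmfull hund
    exact ⟨g, List.mem_filter.2 ⟨hg, decide_eq_true hgfull⟩, (hdec _).2 hclaims⟩
  · rintro ⟨g, hg, hwins⟩
    obtain ⟨hg, hgfull⟩ := List.mem_filter.1 hg
    obtain ⟨m, hm, hmfull, hdec⟩ :=
      exists_mem_moves_of_mem_keptOf ih hg (of_decide_eq_true hgfull)
    exact ⟨m, hm, hmfull, (hdec _).1 hwins⟩

lemma reduceInvariant_of_moves (hφ : ¬ φ.IsAtomic) (hX : X ⊆ B.univ)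
    (ih : ∀ m ∈ φ.moves B, ReduceInvariant m.2 m.1 X) : ReduceInvariant φ B X := by
  have hr := reduce_node_mover hφ (B.restrict (X ∪ B.nulValues)) X
    ((φ.moves B).map fun m => EMC m.2 m.1 X)
  rw [← EMC_eq_node_moves hφ] at hr
  have hmem : ∀ {g}, g ∈ ((φ.moves B).map fun m => EMC m.2 m.1 X).map reduce ↔
      ∃ m ∈ φ.moves B, reduce (EMC m.2 m.1 X) = g := by
    simp
  split_ifs at hr with hwin hkept
  · obtain ⟨m, hm, hmwin⟩ := hmem.1 hwin
    have hB := univ_of_mem_moves hm ▸ (ih m hm).nonempty_of_eq_ofWinner hmwin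
    exact .of_eq_ofWinner hr hB fun C =>
      claims_of_forall_completes_move hφ hB hm ((ih m hm).claims_of_eq_ofWinner hmwin)
  · have hopp : ∀ m ∈ φ.moves B, reduce (EMC m.2 m.1 X) = .ofWinner φ.mover.opp := by
      intro m hm
      obtain ⟨pl, hpl⟩ := exists_reduce_eq_ofWinner_of_keptOf_eq_nil hkept
        (List.mem_map_of_mem (f := fun m => EMC m.2 m.1 X) hm)
      rcases Player.eq_or_eq_opp pl φ.mover with rfl | rfl
      · exact absurd (hmem.2 ⟨m, hm, hpl⟩) hwin
      · exact hpl
    obtain ⟨m, hm⟩ := List.exists_mem_of_ne_nil _ (moves_ne_nil hφ B)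
    exact .of_eq_ofWinner hr
      (univ_of_mem_moves hm ▸ (ih m hm).nonempty_of_eq_ofWinner (hopp m hm))
      fun C => claims_opp_of_forall_moves hφ fun m hm =>
        (ih m hm).claims_of_eq_ofWinner (hopp m hm)
  · refine .of_eq_node hr hX (fun g hg => ?_) fun hB => ?_
    · obtain ⟨h, hh, rfl, -⟩ := exists_of_mem_keptOf hg
      obtain ⟨m, hm, rfl⟩ := List.mem_map.1 hh
      exact (ih m hm).refl
    · rw [hr]
      exact decides_convert_node_keptOf ih hφ hB
        (fun m hm hmwin => hwin (hmem.2 ⟨m, hm, hmwin⟩)) _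

end ReduceInvariant

theorem reduceInvariant {ar : ℕ → ℕ} {φ : MSO} {B : Struc} {X : Finset ℕ}
    (h : Admissible ar B φ) (hX : X ⊆ B.univ) : ReduceInvariant φ B X := by
  by_cases hφ : φ.IsAtomic
  · obtain ⟨hB, har, hwf⟩ := h
    cases φ with
    | atom R cs | natom R cs =>
      refine reduceInvariant_of_isAtomic (cs := cs) trivial hB hX ?_ hwf.2.2 (by rw [EMC])
        fun C hC hi => by simp only [Sat, hC.mapM_nul_eq hi, hC.rel_eq]
      exact List.ne_nil_of_length_pos (hwf.2.1 ▸ har R hwf.1)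
    | _ => exact absurd hφ id
  · exact reduceInvariant_of_moves hφ hX fun m hm =>
      reduceInvariant (h.of_mem_moves hm) (univ_of_mem_moves hm ▸ hX)
termination_by sizeOf φ
decreasing_by exact sizeOf_lt_of_mem_moves hm

/-- for fully interpreted `𝔄` and `𝒢 ≅ reduce(EMC(𝔄, X, φ))`,
`eval(MC(𝔄, φ)) = eval(convert(𝒢))`. -/
theorem statement_13 (ar : ℕ → ℕ) (τ : Vocab) (A : Struc) (X : Finset ℕ)
    (φ : MSO) (G : Game EPos)
    (harity : ∀ R ∈ τ.rels, 1 ≤ ar R)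
    (hA : A.WF ar) (hvoc : A.voc = τ) (hfull : A.FullyInterpreted)
    (hX : X ⊆ A.univ) (hφ : MSO.wf ar τ φ)
    (hG : GEquivE G (reduce (EMC φ A X))) :
    Game.eval (MC φ A) = Game.eval (convert G) := by
  subst hvoc
  have hdecides := (reduceInvariant ⟨hA, harity, hφ⟩ hX).decides hfull
  exact (decides_MC φ A).eval_eq fun pl => (hG.eval_convert_eq_ofWinner_iff pl).trans (hdecides pl)

end MSOG
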